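/- arXiv:2602.13538 — 3 statements merged into one kernel-verified Lean document; each statement's English description precedes it below -/
import Mathlib

section
/- Let p ≥ 1 and m ≥ 0 be integers. Let U be a p×p real orthogonal matrix with columns u_1, …, u_p, let λ_1, …, λ_p ∈ ℝ, and let δ_1, …, δ_p be nonzero real numbers. Let Σ be an invertible symmetric p×p real matrix. Set S = U·diag(λ_1,…,λ_p)·Uᵀ and Σ̃ = U·diag(δ_1,…,δ_p)·Uᵀ. Then tr[(Σ^{−1} − Σ̃^{−1})² S^m] = Σ_{j=1}^p (u_jᵀ Σ^{−2} u_j) λ_j^m − 2 Σ_{j=1}^p (u_jᵀ Σ^{−1} u_j) λ_j^m/δ_j + Σ_{j=1}^p λ_j^m/δ_j². -/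
/-!
Conjugating by `U` turns the whole expression into `tr[(C - D⁻¹)² Λᵐ]` with `C = Uᵀ Σ⁻¹ U`,
`D = diag δ` and `Λ = diag λ`, because `U Uᵀ = 1` gives `Σ⁻¹ = U C Uᵀ`. Against the diagonal `Λᵐ`
only the diagonal entries of `(C - D⁻¹)² = C² - C D⁻¹ - D⁻¹ C + D⁻²` matter, and
`(Cᵏ)_jj = u_jᵀ Σ⁻ᵏ u_j`.
-/

open Matrix

namespace Matrix

variable {n R : Type*} [Fintype n]

theorem transpose_mul_mul_apply [CommSemiring R] (A B : Matrix n n R) (i j : n) :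
    (Bᵀ * A * B) i j = (fun k => B k i) ⬝ᵥ (A *ᵥ fun k => B k j) := by
  simp only [mul_apply, transpose_apply, dotProduct, mulVec, Finset.sum_mul, Finset.mul_sum]
  rw [Finset.sum_comm]
  simp only [mul_assoc]

variable [DecidableEq n]

theorem trace_sq_sub_diagonal_mul_diagonal [CommRing R] (C : Matrix n n R) (e l : n → R) :
    ((C - diagonal e) ^ 2 * diagonal l).trace =
      ∑ j, ((C * C) j j - 2 * C j j * e j + e j ^ 2) * l j := by
  simp only [trace, diag, sq, sub_mul, mul_sub, mul_diagonal, diagonal_mul, sub_apply,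
    diagonal_mul_diagonal, diagonal_apply_eq]
  refine Finset.sum_congr rfl fun j _ => ?_
  ring

section Orthogonal

variable [CommRing R] {U : Matrix n n R}

theorem conj_mul_conj (hU : Uᵀ * U = 1) (X Y : Matrix n n R) :
    U * X * Uᵀ * (U * Y * Uᵀ) = U * (X * Y) * Uᵀ := by
  simp only [mul_assoc, ← mul_assoc Uᵀ U, hU, one_mul]

theorem conj_pow (hU : Uᵀ * U = 1) (X : Matrix n n R) (m : ℕ) :
    (U * X * Uᵀ) ^ m = U * X ^ m * Uᵀ := by
  induction m with
  | zero => rw [pow_zero, pow_zero, mul_one, mul_eq_one_comm.mp hU]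
  | succ m ih => rw [pow_succ, ih, conj_mul_conj hU, ← pow_succ]

theorem eq_mul_mul_transpose (hU : Uᵀ * U = 1) (A : Matrix n n R) :
    A = U * (Uᵀ * A * U) * Uᵀ := by
  have hU' : U * Uᵀ = 1 := mul_eq_one_comm.mp hU
  simp only [mul_assoc, hU', mul_one, ← mul_assoc U Uᵀ, one_mul]

end Orthogonal

theorem inv_conj_diagonal {K : Type*} [Field K] {U : Matrix n n K} (hU : Uᵀ * U = 1)
    {d : n → K} (hd : ∀ j, d j ≠ 0) : (U * diagonal d * Uᵀ)⁻¹ = U * diagonal d⁻¹ * Uᵀ := by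
  refine inv_eq_right_inv ?_
  rw [conj_mul_conj hU, diagonal_mul_diagonal, ← mul_eq_one_comm.mp hU]
  simp [mul_inv_cancel₀ (hd _)]

end Matrix

theorem stmt_1_general (p m : ℕ)
    (U : Matrix (Fin p) (Fin p) ℝ) (hU : Uᵀ * U = 1)
    (lam : Fin p → ℝ) (δ : Fin p → ℝ) (hδ : ∀ j, δ j ≠ 0)
    (Sig : Matrix (Fin p) (Fin p) ℝ)
    (S : Matrix (Fin p) (Fin p) ℝ) (hS : S = U * Matrix.diagonal lam * Uᵀ)
    (Stil : Matrix (Fin p) (Fin p) ℝ) (hStil : Stil = U * Matrix.diagonal δ * Uᵀ) :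
    ((Sig⁻¹ - Stil⁻¹) ^ 2 * S ^ m).trace =
      (∑ j, ((fun i => U i j) ⬝ᵥ ((Sig⁻¹ * Sig⁻¹) *ᵥ fun i => U i j)) * lam j ^ m)
        - 2 * ∑ j, ((fun i => U i j) ⬝ᵥ (Sig⁻¹ *ᵥ fun i => U i j)) * lam j ^ m / δ j
        + ∑ j, lam j ^ m / δ j ^ 2 := by
  have hUUt : U * Uᵀ = 1 := mul_eq_one_comm.mp hU
  have hsq : (Uᵀ * Sig⁻¹ * U) * (Uᵀ * Sig⁻¹ * U) = Uᵀ * (Sig⁻¹ * Sig⁻¹) * U := by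
    simp only [mul_assoc, hUUt, ← mul_assoc U Uᵀ, one_mul]
  conv_lhs =>
    rw [hS, hStil, inv_conj_diagonal hU hδ, conj_pow hU, diagonal_pow,
      eq_mul_mul_transpose hU Sig⁻¹, ← sub_mul, ← mul_sub, conj_pow hU, conj_mul_conj hU,
      trace_mul_cycle, hU, one_mul, trace_sq_sub_diagonal_mul_diagonal, hsq]
  simp only [transpose_mul_mul_apply, Finset.mul_sum, ← Finset.sum_sub_distrib,
    ← Finset.sum_add_distrib, Pi.inv_apply, Pi.pow_apply]
  refine Finset.sum_congr rfl fun j _ => ?_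
  ring

/-- Eigen-decomposition expansion of the generalized relative savings loss
`tr[(Σ⁻¹ − Σ̃⁻¹)² Sᵐ]` for rotation invariant estimators sharing the eigenvectors of `S`. -/
theorem stmt_1 (p m : ℕ) (hp : 1 ≤ p)
    (U : Matrix (Fin p) (Fin p) ℝ) (hU : Uᵀ * U = 1)
    (lam : Fin p → ℝ) (δ : Fin p → ℝ) (hδ : ∀ j, δ j ≠ 0)
    (Sig : Matrix (Fin p) (Fin p) ℝ) (hSig : IsUnit Sig.det) (hSigSym : Sig.IsSymm)
    (S : Matrix (Fin p) (Fin p) ℝ) (hS : S = U * Matrix.diagonal lam * Uᵀ)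
    (Stil : Matrix (Fin p) (Fin p) ℝ) (hStil : Stil = U * Matrix.diagonal δ * Uᵀ) :
    ((Sig⁻¹ - Stil⁻¹) ^ 2 * S ^ m).trace =
      (∑ j, ((fun i => U i j) ⬝ᵥ ((Sig⁻¹ * Sig⁻¹) *ᵥ fun i => U i j)) * lam j ^ m)
        - 2 * ∑ j, ((fun i => U i j) ⬝ᵥ (Sig⁻¹ *ᵥ fun i => U i j)) * lam j ^ m / δ j
        + ∑ j, lam j ^ m / δ j ^ 2 :=
  stmt_1_general p m U hU lam δ hδ Sig S hS Stil hStil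
end

section
/- Let m ≥ 0 be an integer, N ≥ 1, and let K = ⋃_{k=1}^N [a_k, b_k] with 0 < a_1 < b_1 < a_2 < … < a_N < b_N < ∞; for η > 0 write K_η = ⋃_{k=1}^N [a_k − η, b_k + η], and fix η₀ > 0 with K_{η₀} ⊂ (0, ∞). Let (μ_n) and μ be finite Borel measures on ℝ such that: (i) ∫ g dμ_n → ∫ g dμ for every bounded continuous g : ℝ → ℝ; (ii) for all sufficiently large n, μ_n(ℝ \ K_{η₀}) = 0; (iii) μ(ℝ \ K) = 0. Let δ_n, δ : ℝ → ℝ be such that δ is continuous on K_{η₀}, δ_n → δ uniformly on K_{η₀}, and there exist M > 0 and n₀ such that |δ_n(x)| ≥ M for all x ∈ K_{η₀} and all n ≥ n₀. Then ∫ x^m/δ_n(x) dμ_n(x) → ∫ x^m/δ(x) dμ(x) and ∫ x^m/δ_n(x)² dμ_n(x) → ∫ x^m/δ(x)² dμ(x) as n → ∞. -/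
/-!
Extend the continuous limit integrand `f` from the compact set `K_η₀` to a bounded continuous
function `g` on the whole line (Tietze). Weak convergence gives `∫ g dμₙ → ∫ g dμ = ∫ f dμ`, and
since the `μₙ` eventually live on `K_η₀` with bounded total mass,
`|∫ (fₙ - g) dμₙ| ≤ sup_{K_η₀} |fₙ - f| · μₙ(ℝ) → 0`. The integrands `xᵐ / δₙ` and `xᵐ / δₙ²`
converge uniformly on `K_η₀` because `δₙ` stays at distance `M` from zero there.
-/

open MeasureTheory Filter Set Topology BoundedContinuousFunction

section UniformConvergence

variable {ι α β γ : Type*} {l : Filter ι} {s : Set α}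

theorem TendstoUniformlyOn.of_eventually_dist_le_mul [PseudoMetricSpace β]
    [PseudoMetricSpace γ] {F : ι → α → β} {f : α → β} {G : ι → α → γ} {g : α → γ} {C : ℝ}
    (h : TendstoUniformlyOn F f l s)
    (hle : ∀ᶠ n in l, ∀ x ∈ s, dist (G n x) (g x) ≤ C * dist (F n x) (f x)) :
    TendstoUniformlyOn G g l s := by
  rw [Metric.tendstoUniformlyOn_iff] at h ⊢
  intro ε hε
  have hC : 0 < |C| + 1 := by positivity
  filter_upwards [h (ε / (|C| + 1)) (by positivity), hle] with n hn hlen x hx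
  rw [dist_comm]
  calc dist (G n x) (g x) ≤ C * dist (F n x) (f x) := hlen x hx
    _ ≤ |C| * (ε / (|C| + 1)) := by
        rw [dist_comm (F n x)]
        exact (mul_le_mul_of_nonneg_right (le_abs_self C) dist_nonneg).trans
          (mul_le_mul_of_nonneg_left (hn x hx).le (abs_nonneg C))
    _ < ε := by
        rw [mul_div_assoc', div_lt_iff₀ hC]
        linarith

variable {R : Type*} [NormedRing R]

theorem TendstoUniformlyOn.mul_left_of_norm_le {F : ι → α → R} {f : α → R} {p : α → R}
    {C : ℝ} (hp : ∀ x ∈ s, ‖p x‖ ≤ C) (h : TendstoUniformlyOn F f l s) :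
    TendstoUniformlyOn (fun n x => p x * F n x) (fun x => p x * f x) l s := by
  refine h.of_eventually_dist_le_mul (C := C) (Eventually.of_forall fun n x hx => ?_)
  rw [dist_eq_norm, dist_eq_norm, ← mul_sub]
  exact (norm_mul_le _ _).trans (mul_le_mul_of_nonneg_right (hp x hx) (norm_nonneg _))

theorem TendstoUniformlyOn.sq_of_norm_le {F : ι → α → R} {f : α → R} {C : ℝ}
    (hf : ∀ x ∈ s, ‖f x‖ ≤ C) (h : TendstoUniformlyOn F f l s) :
    TendstoUniformlyOn (fun n x => F n x ^ 2) (fun x => f x ^ 2) l s := by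
  refine h.of_eventually_dist_le_mul (C := 2 * C + 1) ?_
  filter_upwards [Metric.tendstoUniformlyOn_iff.1 h 1 one_pos] with n hn x hx
  have hF : ‖F n x‖ ≤ C + 1 := by
    have := norm_le_norm_add_norm_sub' (F n x) (f x)
    have := (dist_eq_norm' (f x) (F n x)) ▸ hn x hx
    linarith [hf x hx]
  -- `a² - b² = a (a - b) + (a - b) b` holds without commutativity
  have hsq : F n x ^ 2 - f x ^ 2 = F n x * (F n x - f x) + (F n x - f x) * f x := by
    noncomm_ring
  rw [dist_eq_norm, dist_eq_norm, hsq]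
  calc ‖F n x * (F n x - f x) + (F n x - f x) * f x‖
      ≤ ‖F n x‖ * ‖F n x - f x‖ + ‖F n x - f x‖ * ‖f x‖ :=
        (norm_add_le _ _).trans (add_le_add (norm_mul_le _ _) (norm_mul_le _ _))
    _ ≤ (C + 1) * ‖F n x - f x‖ + ‖F n x - f x‖ * C := by
        gcongr
        exact hf x hx
    _ = (2 * C + 1) * ‖F n x - f x‖ := by ring

theorem TendstoUniformlyOn.inv_of_le_norm {𝕜 : Type*} [NormedField 𝕜] {F : ι → α → 𝕜}
    {f : α → 𝕜} {M : ℝ} (hM : 0 < M) (hF : ∀ᶠ n in l, ∀ x ∈ s, M ≤ ‖F n x‖)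
    (hf : ∀ x ∈ s, M ≤ ‖f x‖) (h : TendstoUniformlyOn F f l s) :
    TendstoUniformlyOn (fun n x => (F n x)⁻¹) (fun x => (f x)⁻¹) l s := by
  refine h.of_eventually_dist_le_mul (C := 1 / M ^ 2) ?_
  filter_upwards [hF] with n hn x hx
  have hFx := hn x hx
  have hfx := hf x hx
  have hF0 : F n x ≠ 0 := norm_pos_iff.1 (hM.trans_le hFx)
  have hf0 : f x ≠ 0 := norm_pos_iff.1 (hM.trans_le hfx)
  rw [dist_eq_norm, dist_eq_norm, inv_sub_inv hF0 hf0, norm_div, norm_mul, norm_sub_rev,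
    div_le_iff₀ (by positivity), one_div_mul_eq_div, div_mul_eq_mul_div,
    le_div_iff₀ (by positivity)]
  have : M ^ 2 ≤ ‖F n x‖ * ‖f x‖ := by nlinarith
  exact mul_le_mul_of_nonneg_left this (norm_nonneg _)

end UniformConvergence

theorem IsCompact.exists_boundedContinuousFunction_eqOn {X : Type*} [TopologicalSpace X]
    [NormalSpace X] [T2Space X] {s : Set X} (hs : IsCompact s) {f : X → ℝ}
    (hf : ContinuousOn f s) : ∃ g : X →ᵇ ℝ, EqOn g f s := by
  have : CompactSpace s := isCompact_iff_compactSpace.1 hs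
  obtain ⟨g, -, hg⟩ := BoundedContinuousFunction.exists_extension_norm_eq_of_isClosedEmbedding
    (BoundedContinuousFunction.mkOfCompact ⟨s.domRestrict f, hf.domRestrict⟩)
    hs.isClosed.isClosedEmbedding_subtypeVal
  exact ⟨g, fun x hx => congrFun hg ⟨x, hx⟩⟩

section WeakConvergence

variable {X β : Type*} [MeasurableSpace X] {μs : ℕ → Measure X} {s : Set X}

theorem TendstoUniformlyOn.eventually_ae_dist_lt [PseudoMetricSpace β] {F : ℕ → X → β}
    {f : X → β} (h : TendstoUniformlyOn F f atTop s) (hμs : ∀ᶠ n in atTop, μs n sᶜ = 0)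
    {ε : ℝ} (hε : 0 < ε) : ∀ᶠ n in atTop, ∀ᵐ x ∂μs n, dist (F n x) (f x) < ε := by
  filter_upwards [Metric.tendstoUniformlyOn_iff.1 h ε hε, hμs] with n hn hsn
  filter_upwards [ae_iff.2 hsn] with x hx
  rw [dist_comm]
  exact hn x hx

theorem tendsto_integral_of_tendstoUniformlyOn_zero [∀ n, IsFiniteMeasure (μs n)] {B : ℝ}
    (hmass : ∀ᶠ n in atTop, (μs n).real univ ≤ B) (hμs : ∀ᶠ n in atTop, μs n sᶜ = 0)
    {h : ℕ → X → ℝ} (hu : TendstoUniformlyOn h 0 atTop s) :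
    Tendsto (fun n => ∫ x, h n x ∂μs n) atTop (𝓝 0) := by
  rw [NormedAddGroup.tendsto_nhds_zero]
  intro ε hε
  have hB : 0 < |B| + 1 := by positivity
  filter_upwards [hu.eventually_ae_dist_lt hμs (div_pos hε hB), hmass] with n hn hmn
  have hbound : ∀ᵐ x ∂μs n, ‖h n x‖ ≤ ε / (|B| + 1) := by
    filter_upwards [hn] with x hx
    simpa [dist_eq_norm] using hx.le
  calc ‖∫ x, h n x ∂μs n‖ ≤ ε / (|B| + 1) * (μs n).real univ :=
        norm_integral_le_of_norm_le_const hbound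
    _ ≤ ε / (|B| + 1) * |B| := by gcongr; exact hmn.trans (le_abs_self B)
    _ < ε := by
        rw [div_mul_eq_mul_div, div_lt_iff₀ hB]
        linarith

variable [TopologicalSpace X] [NormalSpace X] [T2Space X] [OpensMeasurableSpace X]
  {μ : Measure X} [∀ n, IsFiniteMeasure (μs n)]

theorem tendsto_integral_of_tendstoUniformlyOn
    (hweak : ∀ g : X →ᵇ ℝ, Tendsto (fun n => ∫ x, g x ∂μs n) atTop (𝓝 (∫ x, g x ∂μ)))
    (hs : IsCompact s) (hμs : ∀ᶠ n in atTop, μs n sᶜ = 0) (hμ : μ sᶜ = 0)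
    {fs : ℕ → X → ℝ} {f : X → ℝ} (hfs : ∀ n, AEStronglyMeasurable (fs n) (μs n))
    (hf : ContinuousOn f s) (hu : TendstoUniformlyOn fs f atTop s) :
    Tendsto (fun n => ∫ x, fs n x ∂μs n) atTop (𝓝 (∫ x, f x ∂μ)) := by
  obtain ⟨g, hg⟩ := hs.exists_boundedContinuousFunction_eqOn hf
  have hmass : ∀ᶠ n in atTop, (μs n).real univ ≤ μ.real univ + 1 := by
    have := hweak 1
    simp only [BoundedContinuousFunction.coe_one, Pi.one_apply, integral_const, smul_eq_mul,
      mul_one] at this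
    exact this.eventually (eventually_le_nhds (lt_add_one _))
  have hdiff : TendstoUniformlyOn (fun n x => fs n x - g x) 0 atTop s :=
    hu.of_eventually_dist_le_mul (C := 1)
      (Eventually.of_forall fun n x hx => by simp [hg hx, dist_eq_norm])
  have hint : ∀ᶠ n in atTop, Integrable (fs n) (μs n) := by
    filter_upwards [hdiff.eventually_ae_dist_lt hμs one_pos] with n hn
    refine Integrable.of_bound (hfs n) (1 + ‖g‖) ?_
    filter_upwards [hn] with x hx
    have := norm_le_norm_add_norm_sub' (fs n x) (g x)
    have := g.norm_coe_le_norm x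
    simp only [Pi.zero_apply, dist_zero_right] at hx
    linarith
  have hlim : ∫ x, g x ∂μ = ∫ x, f x ∂μ :=
    integral_congr_ae ((ae_iff.2 hμ).mono fun x hx => hg hx)
  have := (tendsto_integral_of_tendstoUniformlyOn_zero hmass hμs hdiff).add (hweak g)
  rw [zero_add, hlim] at this
  refine this.congr' ?_
  filter_upwards [hint] with n hn
  rw [integral_sub hn (g.integrable _), sub_add_cancel]

end WeakConvergence

theorem stmt_3_general (m N : ℕ) (a b : Fin N → ℝ)
    (η₀ : ℝ) (hη₀ : 0 < η₀)
    (μseq : ℕ → Measure ℝ) (μ : Measure ℝ)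
    [∀ n, IsFiniteMeasure (μseq n)]
    (hweak : ∀ g : BoundedContinuousFunction ℝ ℝ,
      Tendsto (fun n => ∫ x, g x ∂(μseq n)) atTop (nhds (∫ x, g x ∂μ)))
    (hsupp_n : ∀ᶠ n in atTop, μseq n (⋃ k, Set.Icc (a k - η₀) (b k + η₀))ᶜ = 0)
    (hsupp : μ (⋃ k, Set.Icc (a k) (b k))ᶜ = 0)
    (δseq : ℕ → ℝ → ℝ) (δ : ℝ → ℝ)
    (hδmeas : ∀ n, Measurable (δseq n))
    (hδcont : ContinuousOn δ (⋃ k, Set.Icc (a k - η₀) (b k + η₀)))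
    (hδunif : TendstoUniformlyOn δseq δ atTop (⋃ k, Set.Icc (a k - η₀) (b k + η₀)))
    (M : ℝ) (hM : 0 < M) (n₀ : ℕ)
    (hlb : ∀ n ≥ n₀, ∀ x ∈ ⋃ k, Set.Icc (a k - η₀) (b k + η₀), M ≤ |δseq n x|) :
    Tendsto (fun n => ∫ x, x ^ m / δseq n x ∂(μseq n)) atTop
        (nhds (∫ x, x ^ m / δ x ∂μ)) ∧
      Tendsto (fun n => ∫ x, x ^ m / (δseq n x) ^ 2 ∂(μseq n)) atTop
        (nhds (∫ x, x ^ m / (δ x) ^ 2 ∂μ)) := by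
  set s := ⋃ k, Icc (a k - η₀) (b k + η₀)
  have hs : IsCompact s := isCompact_iUnion fun k => isCompact_Icc
  have hμ : μ sᶜ = 0 := measure_mono_null (compl_subset_compl.2 <|
    iUnion_mono fun k => Icc_subset_Icc (by linarith) (by linarith)) hsupp
  have hδseq_ge : ∀ᶠ n in atTop, ∀ x ∈ s, M ≤ |δseq n x| := eventually_atTop.2 ⟨n₀, hlb⟩
  have hδ_ge : ∀ x ∈ s, M ≤ |δ x| := fun x hx =>
    ge_of_tendsto (hδunif.tendsto_at hx).abs (hδseq_ge.mono fun n hn => hn x hx)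
  have hδ_ne : ∀ x ∈ s, δ x ≠ 0 := fun x hx => abs_pos.1 (hM.trans_le (hδ_ge x hx))
  have hinv := hδunif.inv_of_le_norm hM hδseq_ge hδ_ge
  have hinv_le : ∀ x ∈ s, ‖(δ x)⁻¹‖ ≤ M⁻¹ := fun x hx => by
    rw [norm_inv]; exact inv_anti₀ hM (hδ_ge x hx)
  obtain ⟨C, hC⟩ := hs.exists_bound_of_continuousOn (continuous_pow m).continuousOn
  simp only [div_eq_mul_inv, ← inv_pow]
  constructor
  · refine tendsto_integral_of_tendstoUniformlyOn hweak hs hsupp_n hμ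
      (fun n => by fun_prop) ?_ (hinv.mul_left_of_norm_le hC)
    exact (continuous_pow m).continuousOn.mul (hδcont.inv₀ hδ_ne)
  · refine tendsto_integral_of_tendstoUniformlyOn hweak hs hsupp_n hμ
      (fun n => by fun_prop) ?_ ((hinv.sq_of_norm_le hinv_le).mul_left_of_norm_le hC)
    exact (continuous_pow m).continuousOn.mul ((hδcont.inv₀ hδ_ne).pow 2)

/-- Deterministic convergence lemma at the core of Theorems 5 and 8: weak convergence of
finite measures supported on (an enlargement of) a finite union of compact intervals
away from zero, together with uniform convergence and uniform non-degeneracy of the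
shrinkage functions, implies convergence of the loss integrals. -/
theorem stmt_3 (m N : ℕ) (hN : 1 ≤ N) (a b : Fin N → ℝ)
    (hab : ∀ k, a k < b k) (hord : ∀ k l : Fin N, k < l → b k < a l)
    (ha0 : 0 < a ⟨0, hN⟩)
    (η₀ : ℝ) (hη₀ : 0 < η₀)
    (hKη₀ : (⋃ k, Set.Icc (a k - η₀) (b k + η₀)) ⊆ Set.Ioi (0 : ℝ))
    (μseq : ℕ → Measure ℝ) (μ : Measure ℝ)
    [∀ n, IsFiniteMeasure (μseq n)] [IsFiniteMeasure μ]
    (hweak : ∀ g : BoundedContinuousFunction ℝ ℝ,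
      Tendsto (fun n => ∫ x, g x ∂(μseq n)) atTop (nhds (∫ x, g x ∂μ)))
    (hsupp_n : ∀ᶠ n in atTop, μseq n (⋃ k, Set.Icc (a k - η₀) (b k + η₀))ᶜ = 0)
    (hsupp : μ (⋃ k, Set.Icc (a k) (b k))ᶜ = 0)
    (δseq : ℕ → ℝ → ℝ) (δ : ℝ → ℝ)
    (hδmeas : ∀ n, Measurable (δseq n))
    (hδcont : ContinuousOn δ (⋃ k, Set.Icc (a k - η₀) (b k + η₀)))
    (hδunif : TendstoUniformlyOn δseq δ atTop (⋃ k, Set.Icc (a k - η₀) (b k + η₀)))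
    (M : ℝ) (hM : 0 < M) (n₀ : ℕ)
    (hlb : ∀ n ≥ n₀, ∀ x ∈ ⋃ k, Set.Icc (a k - η₀) (b k + η₀), M ≤ |δseq n x|) :
    Tendsto (fun n => ∫ x, x ^ m / δseq n x ∂(μseq n)) atTop
        (nhds (∫ x, x ^ m / δ x ∂μ)) ∧
      Tendsto (fun n => ∫ x, x ^ m / (δseq n x) ^ 2 ∂(μseq n)) atTop
        (nhds (∫ x, x ^ m / (δ x) ^ 2 ∂μ)) :=
  stmt_3_general m N a b η₀ hη₀ μseq μ hweak hsupp_n hsupp δseq δ hδmeas hδcont hδunif M hM n₀ hlb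
end

section
/- Let d ≥ 1, K ≥ 1, let π_1, …, π_K > 0 with Σ_{k=1}^K π_k = 1, and let m_1, …, m_K : ℝ^d → ℝ be positive functions that are twice differentiable at a point x ∈ ℝ^d. Set m_*(y) = Σ_{k} π_k m_k(y), and for a positive twice-differentiable function f define t_f(x) = x + ∇ log f(x) and D_f(x) = ‖∇ log f(x)‖² − 2·Δf(x)/f(x), where Δ is the Laplacian; set π_k*(x) = π_k m_k(x)/m_*(x). Then: (a) t_{m_*}(x) = Σ_{k=1}^K π_k*(x)·t_{m_k}(x); and (b) D_{m_*}(x) = Σ_{k=1}^K π_k*(x)·[ D_{m_k}(x) − (1/2)·Σ_{l=1}^K π_l*(x)·‖t_{m_k}(x) − t_{m_l}(x)‖² ]. -/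
/-!
Differentiating `log m_*` gives `∇m_*/m_* = Σ_k π_k* ∇m_k/m_k`: the score of the mixture is
the posterior mean of the component scores, which is (a) after adding `x`. Likewise
`Δm_*/m_* = Σ_k π_k* Δm_k/m_k`, so (b) reduces to the variance decomposition
`‖Σ_k a_k v_k‖² = Σ_k a_k ‖v_k‖² - ½ Σ_{k,l} a_k a_l ‖v_k - v_l‖²` (for `Σ_k a_k = 1`)
applied to the scores `v_k = ∇ log m_k(x)`, whose differences are those of the `t_{m_k}(x)`.
-/

open MeasureTheory

/-- Coordinate Laplacian `Δf(x) = Σ_i ∂²f/∂x_i²(x)` on Euclidean space. -/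
noncomputable def lapl {d : ℕ} (f : EuclideanSpace ℝ (Fin d) → ℝ)
    (x : EuclideanSpace ℝ (Fin d)) : ℝ :=
  ∑ i, fderiv ℝ (fun y => fderiv ℝ f y (EuclideanSpace.single i 1)) x
      (EuclideanSpace.single i 1)

/-- The Tweedie-type shrinkage rule `t_f(x) = x + ∇ log f(x)`. -/
noncomputable def tweedieRule {d : ℕ} (f : EuclideanSpace ℝ (Fin d) → ℝ)
    (x : EuclideanSpace ℝ (Fin d)) : EuclideanSpace ℝ (Fin d) :=
  x + gradient (fun y => Real.log (f y)) x

/-- The risk-gain functional `D_f(x) = ‖∇ log f(x)‖² − 2·Δf(x)/f(x)`. -/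
noncomputable def gainD {d : ℕ} (f : EuclideanSpace ℝ (Fin d) → ℝ)
    (x : EuclideanSpace ℝ (Fin d)) : ℝ :=
  ‖gradient (fun y => Real.log (f y)) x‖ ^ 2 - 2 * lapl f x / f x

open Finset
open scoped RealInnerProductSpace

theorem add_sum_smul_of_sum_eq_one {ι R M : Type*} [Fintype ι] [Semiring R] [AddCommMonoid M]
    [Module R M] {a : ι → R} (ha : ∑ k, a k = 1) (x : M) (v : ι → M) :
    x + ∑ k, a k • v k = ∑ k, a k • (x + v k) := by
  simp only [smul_add, sum_add_distrib, ← sum_smul, ha, one_smul]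

section InnerProductSpace

variable {ι E : Type*} [Fintype ι] [NormedAddCommGroup E] [InnerProductSpace ℝ E]

theorem norm_sum_smul_sq_of_sum_eq_one {a : ι → ℝ} (ha : ∑ k, a k = 1) (v : ι → E) :
    ‖∑ k, a k • v k‖ ^ 2 =
      ∑ k, a k * ‖v k‖ ^ 2 - 1 / 2 * ∑ k, a k * ∑ l, a l * ‖v k - v l‖ ^ 2 := by
  have hmean : ‖∑ k, a k • v k‖ ^ 2 = ∑ k, a k * ∑ l, a l * ⟪v k, v l⟫ := by
    rw [← real_inner_self_eq_norm_sq, sum_inner]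
    simp only [inner_sum, real_inner_smul_left, real_inner_smul_right, mul_sum]
    exact sum_congr rfl fun _ _ => sum_congr rfl fun _ _ => mul_left_comm _ _ _
  have hpair : ∑ k, a k * ∑ l, a l * ‖v k - v l‖ ^ 2 =
      2 * ∑ k, a k * ‖v k‖ ^ 2 - 2 * ∑ k, a k * ∑ l, a l * ⟪v k, v l⟫ := by
    simp only [norm_sub_sq_real, mul_sub, mul_add, sum_sub_distrib, sum_add_distrib, ← sum_mul,
      ha]
    simp only [one_mul, mul_left_comm _ (2 : ℝ), ← mul_sum]
    linarith
  rw [hmean, hpair]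
  ring

variable [CompleteSpace E]

theorem gradient_log_comp {f : E → ℝ} {x : E} (hf : DifferentiableAt ℝ f x) (hx : f x ≠ 0) :
    gradient (fun y => Real.log (f y)) x = (f x)⁻¹ • gradient f x := by
  have h : HasFDerivAt (fun y => Real.log (f y)) ((f x)⁻¹ • fderiv ℝ f x) x :=
    (Real.hasDerivAt_log hx).comp_hasFDerivAt x hf.hasFDerivAt
  simp only [gradient, h.fderiv, map_smul]

theorem gradient_sum_const_mul (w : ι → ℝ) {m : ι → E → ℝ} {x : E}
    (hm : ∀ k, DifferentiableAt ℝ (m k) x) :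
    gradient (fun y => ∑ k, w k * m k y) x = ∑ k, w k • gradient (m k) x := by
  have h := HasFDerivAt.fun_sum fun k (_ : k ∈ univ) => (hm k).hasFDerivAt.const_mul (w k)
  simp only [gradient, h.fderiv, map_sum, map_smul]

theorem gradient_log_sum_const_mul (w : ι → ℝ) {m : ι → E → ℝ} {x : E}
    (hm : ∀ k, DifferentiableAt ℝ (m k) x) (hmx : ∀ k, m k x ≠ 0)
    (hsum : ∑ k, w k * m k x ≠ 0) :
    gradient (fun y => Real.log (∑ k, w k * m k y)) x =
      ∑ k, (w k * m k x / ∑ j, w j * m j x) • gradient (fun y => Real.log (m k y)) x := by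
  have hmix : DifferentiableAt ℝ (fun y => ∑ k, w k * m k y) x :=
    DifferentiableAt.fun_sum fun k _ => (hm k).const_mul (w k)
  rw [gradient_log_comp hmix hsum, gradient_sum_const_mul w hm, smul_sum]
  refine sum_congr rfl fun k _ => ?_
  rw [gradient_log_comp (hm k) (hmx k), smul_smul, smul_smul]
  congr 1
  field_simp [hmx k]

end InnerProductSpace

theorem fderiv_fderiv_apply_sum_const_mul {ι E : Type*} [Fintype ι] [NormedAddCommGroup E]
    [NormedSpace ℝ E] (w : ι → ℝ) {m : ι → E → ℝ} {x : E} (hm : ∀ k, ContDiffAt ℝ 2 (m k) x)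
    (v : E) :
    fderiv ℝ (fun y => fderiv ℝ (fun z => ∑ k, w k * m k z) y v) x v =
      ∑ k, w k * fderiv ℝ (fun y => fderiv ℝ (m k) y v) x v := by
  have hnear : ∀ᶠ y in nhds x, ∀ k, DifferentiableAt ℝ (m k) y :=
    Filter.eventually_all.2 fun k =>
      ((hm k).eventually (by norm_num)).mono fun y hy => hy.differentiableAt two_ne_zero
  have hfirst : (fun y => fderiv ℝ (fun z => ∑ k, w k * m k z) y v)
      =ᶠ[nhds x] fun y => ∑ k, w k * fderiv ℝ (m k) y v := by
    filter_upwards [hnear] with y hy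
    rw [(HasFDerivAt.fun_sum fun k (_ : k ∈ univ) =>
      (hy k).hasFDerivAt.const_mul (w k)).fderiv]
    simp
  have hsecond : ∀ k, DifferentiableAt ℝ (fun y => fderiv ℝ (m k) y v) x := fun k =>
    (((hm k).fderiv_right (m := 1) (by norm_num)).differentiableAt one_ne_zero).clm_apply
      (differentiableAt_const v)
  rw [hfirst.fderiv_eq, fderiv_fun_sum fun k _ => (hsecond k).const_mul (w k)]
  simp [fderiv_const_mul (hsecond _)]

theorem lapl_sum_const_mul {ι : Type*} [Fintype ι] {d : ℕ} (w : ι → ℝ)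
    {m : ι → EuclideanSpace ℝ (Fin d) → ℝ} {x : EuclideanSpace ℝ (Fin d)}
    (hm : ∀ k, ContDiffAt ℝ 2 (m k) x) :
    lapl (fun y => ∑ k, w k * m k y) x = ∑ k, w k * lapl (m k) x := by
  simp only [lapl, fderiv_fderiv_apply_sum_const_mul w hm, mul_sum]
  exact sum_comm

theorem stmt_13_general (d K : ℕ) (hK : 1 ≤ K)
    (w : Fin K → ℝ) (hw : ∀ k, 0 < w k)
    (m : Fin K → EuclideanSpace ℝ (Fin d) → ℝ)
    (x : EuclideanSpace ℝ (Fin d))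
    (hmpos : ∀ k y, 0 < m k y)
    (hmdiff : ∀ k, ContDiffAt ℝ 2 (m k) x)
    (mstar : EuclideanSpace ℝ (Fin d) → ℝ)
    (hmstar : ∀ y, mstar y = ∑ k, w k * m k y)
    (wstar : Fin K → ℝ)
    (hwstar : ∀ k, wstar k = w k * m k x / mstar x) :
    tweedieRule mstar x = ∑ k, wstar k • tweedieRule (m k) x ∧
    gainD mstar x = ∑ k, wstar k *
      (gainD (m k) x -
        (1 / 2) * ∑ l, wstar l * ‖tweedieRule (m k) x - tweedieRule (m l) x‖ ^ 2) := by
  obtain rfl : mstar = fun y => ∑ k, w k * m k y := funext hmstar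
  beta_reduce at hwstar
  have : Nonempty (Fin K) := ⟨⟨0, hK⟩⟩
  have hmx k : m k x ≠ 0 := (hmpos k x).ne'
  have hmix : ∑ k, w k * m k x ≠ 0 :=
    (sum_pos (fun k _ => mul_pos (hw k) (hmpos k x)) univ_nonempty).ne'
  have hposterior : ∑ k, wstar k = 1 := by simp only [hwstar, ← sum_div, div_self hmix]
  have hscore : gradient (fun y => Real.log (∑ k, w k * m k y)) x =
      ∑ k, wstar k • gradient (fun y => Real.log (m k y)) x := by
    rw [gradient_log_sum_const_mul w (fun k => (hmdiff k).differentiableAt two_ne_zero) hmx hmix]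
    simp only [hwstar]
  have hlapl : lapl (fun y => ∑ k, w k * m k y) x / ∑ k, w k * m k x =
      ∑ k, wstar k * (lapl (m k) x / m k x) := by
    rw [lapl_sum_const_mul w hmdiff, sum_div]
    refine sum_congr rfl fun k _ => ?_
    rw [hwstar k]
    field_simp [hmx k]
  refine ⟨?_, ?_⟩
  · rw [tweedieRule, hscore, add_sum_smul_of_sum_eq_one hposterior]
    rfl
  · rw [gainD, hscore, mul_div_assoc, hlapl, norm_sum_smul_sq_of_sum_eq_one hposterior]
    simp only [gainD, tweedieRule, add_sub_add_left_eq_sub, mul_sub, sum_sub_distrib,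
      mul_div_assoc, mul_left_comm (wstar _), ← mul_sum]
    ring

/-- Mixture decomposition of Section S.2 (following George 1986): for the mixture
marginal `m_* = Σ_k π_k m_k`, the shrinkage rule `t_{m_*}` is the posterior-weighted
combination of the component rules, and `D_{m_*}` is a posterior-weighted combination of
the component gains minus the pairwise shrinkage-conflict term. -/
theorem stmt_13 (d K : ℕ) (hd : 1 ≤ d) (hK : 1 ≤ K)
    (w : Fin K → ℝ) (hw : ∀ k, 0 < w k) (hw1 : ∑ k, w k = 1)
    (m : Fin K → EuclideanSpace ℝ (Fin d) → ℝ)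
    (x : EuclideanSpace ℝ (Fin d))
    (hmpos : ∀ k y, 0 < m k y)
    (hmdiff : ∀ k, ContDiffAt ℝ 2 (m k) x)
    (mstar : EuclideanSpace ℝ (Fin d) → ℝ)
    (hmstar : ∀ y, mstar y = ∑ k, w k * m k y)
    (wstar : Fin K → ℝ)
    (hwstar : ∀ k, wstar k = w k * m k x / mstar x) :
    tweedieRule mstar x = ∑ k, wstar k • tweedieRule (m k) x ∧
    gainD mstar x = ∑ k, wstar k *
      (gainD (m k) x -
        (1 / 2) * ∑ l, wstar l * ‖tweedieRule (m k) x - tweedieRule (m l) x‖ ^ 2) :=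
  stmt_13_general d K hK w hw m x hmpos hmdiff mstar hmstar wstar hwstar
end
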